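/- arXiv:1303.1860 — 5 statements merged into one kernel-verified Lean document; each statement's English description precedes it below -/
import Mathlib

section
/- Let X be a symmetric n×n matrix of variables over a field of characteristic 0, with det(X) a polynomial in the variables x_{ij} (i ≤ j). For any i < j, the differential operator ∂²/∂x_{ij}² + 2·∂²/(∂x_{ii}∂x_{jj}) annihilates det(X). -/
/-!
Expand `det X = ∑ σ, sign σ • ∏ a, x_{σ a, a}`. The variables `x_{ij}`, `x_{ii}`, `x_{jj}` occur
only in the factors with `a = i` or `a = j`, so the operator maps the `σ`-term to the product of the
other factors times its value on `x_{σ i, i} x_{σ j, j}`, a constant that is symmetric in `σ i` and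
`σ j`. Hence the terms of `σ` and `σ * swap i j` are sent to opposite values and cancel.
-/

open MvPolynomial Finset Equiv

section
variable {σ R : Type*} [CommRing R]

lemma pderiv_prod_X_eq_zero {ι : Type*} {s : Finset ι} {e : ι → σ} {v : σ}
    (h : ∀ a ∈ s, e a ≠ v) : pderiv v (∏ a ∈ s, (X (e a) : MvPolynomial σ R)) = 0 :=
  Finset.prod_induction _ (fun p => pderiv v p = 0)
    (fun p q hp hq => by rw [Derivation.leibniz, hp, hq, smul_zero, smul_zero, add_zero])
    pderiv_one (fun a ha => pderiv_X_of_ne (h a ha))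

lemma pderiv_pderiv_mul_of_pderiv_eq_zero {u w : σ} {f : MvPolynomial σ R} (g : MvPolynomial σ R)
    (hu : pderiv u f = 0) (hw : pderiv w f = 0) :
    pderiv u (pderiv w (f * g)) = f * pderiv u (pderiv w g) := by
  rw [Derivation.leibniz, hw, smul_zero, add_zero, smul_eq_mul, Derivation.leibniz, hu,
    smul_zero, add_zero, smul_eq_mul]

end

section
variable {ι R : Type*} [CommRing R]

noncomputable def pairOp (i j : ι) : Module.End R (MvPolynomial (Sym2 ι) R) :=
  (pderiv s(i, j)).toLinearMap ∘ₗ (pderiv s(i, j)).toLinearMap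
    + 2 • ((pderiv s(i, i)).toLinearMap ∘ₗ (pderiv s(j, j)).toLinearMap)

lemma pairOp_apply (i j : ι) (p : MvPolynomial (Sym2 ι) R) :
    pairOp i j p = pderiv s(i, j) (pderiv s(i, j) p) + 2 * pderiv s(i, i) (pderiv s(j, j) p) := by
  simp [pairOp, two_mul, two_smul]

lemma pairOp_mul_of_pderiv_eq_zero {i j : ι} {f : MvPolynomial (Sym2 ι) R}
    (hij : pderiv s(i, j) f = 0) (hii : pderiv s(i, i) f = 0) (hjj : pderiv s(j, j) f = 0)
    (g : MvPolynomial (Sym2 ι) R) : pairOp i j (f * g) = f * pairOp i j g := by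
  rw [pairOp_apply, pairOp_apply, pderiv_pderiv_mul_of_pderiv_eq_zero g hij hij,
    pderiv_pderiv_mul_of_pderiv_eq_zero g hii hjj, mul_add, mul_left_comm]

lemma pairOp_X_mul_X_comm {i j : ι} (hij : i ≠ j) (a b : ι) :
    pairOp i j (X s(a, i) * X s(b, j) : MvPolynomial (Sym2 ι) R)
      = pairOp i j (X s(b, i) * X s(a, j)) := by
  classical
  simp only [pairOp_apply, Derivation.leibniz, pderiv_X, smul_eq_mul]
  by_cases ha : a = i <;> by_cases hb : b = j <;> by_cases ha' : a = j <;> by_cases hb' : b = i <;>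
    simp_all [Pi.single_apply, eq_comm, one_add_one_eq_two]

end

lemma sum_perm_sign_smul_eq_zero_of_mul_swap {ι M : Type*} [Fintype ι] [DecidableEq ι]
    [AddCommGroup M] {f : Perm ι → M} {i j : ι} (hij : i ≠ j)
    (hf : ∀ σ, f (σ * swap i j) = f σ) : ∑ σ, Perm.sign σ • f σ = 0 := by
  refine sum_ninvolution (· * swap i j) (fun σ => ?_) (fun σ _ => ?_) (fun _ => mem_univ _)
    (fun σ => by simp [mul_assoc])
  · rw [hf, Perm.sign_mul, Perm.sign_swap hij, mul_neg_one, Units.neg_smul, add_neg_cancel]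
  · simpa [mul_eq_left] using hij

section
variable {ι R : Type*} [Fintype ι] [DecidableEq ι] [CommRing R]

lemma pairOp_prod_X {i j : ι} (hij : i ≠ j) (σ : Perm ι) :
    pairOp i j (∏ a, X s(σ a, a) : MvPolynomial (Sym2 ι) R)
      = (∏ a ∈ {i, j}ᶜ, X s(σ a, a)) * pairOp i j (X s(σ i, i) * X s(σ j, j)) := by
  have hne : ∀ {x y}, x ∈ ({i, j} : Finset ι) → y ∈ ({i, j} : Finset ι) →
      ∀ a ∈ ({i, j} : Finset ι)ᶜ, s(σ a, a) ≠ s(x, y) := by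
    intro x y hx hy a ha h
    have : a ∈ s(x, y) := h ▸ Sym2.mem_mk_right _ _
    rcases Sym2.mem_iff.mp this with rfl | rfl <;> simp_all
  rw [← prod_compl_mul_prod {i, j}, prod_pair hij]
  exact pairOp_mul_of_pderiv_eq_zero (pderiv_prod_X_eq_zero (hne (by simp) (by simp)))
    (pderiv_prod_X_eq_zero (hne (by simp) (by simp)))
    (pderiv_prod_X_eq_zero (hne (by simp) (by simp))) _

lemma pairOp_prod_X_mul_swap {i j : ι} (hij : i ≠ j) (σ : Perm ι) :
    pairOp i j (∏ a, X s((σ * swap i j) a, a) : MvPolynomial (Sym2 ι) R)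
      = pairOp i j (∏ a, X s(σ a, a)) := by
  have hcompl : ∏ a ∈ {i, j}ᶜ, (X s((σ * swap i j) a, a) : MvPolynomial (Sym2 ι) R)
      = ∏ a ∈ {i, j}ᶜ, X s(σ a, a) := by
    refine prod_congr rfl fun a ha => ?_
    simp only [mem_compl, mem_insert, mem_singleton, not_or] at ha
    rw [Perm.mul_apply, swap_apply_of_ne_of_ne ha.1 ha.2]
  rw [pairOp_prod_X hij, pairOp_prod_X hij, hcompl, Perm.mul_apply, Perm.mul_apply,
    swap_apply_left, swap_apply_right, pairOp_X_mul_X_comm hij]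

lemma pairOp_det_symm {i j : ι} (hij : i ≠ j) :
    pairOp i j (Matrix.of fun a b : ι => (X s(a, b) : MvPolynomial (Sym2 ι) R)).det = 0 := by
  rw [Matrix.det_apply, map_sum]
  simp only [Matrix.of_apply, LinearMap.map_smul_of_tower]
  exact sum_perm_sign_smul_eq_zero_of_mul_swap hij (pairOp_prod_X_mul_swap hij)

end

theorem diag_permanent_annihilates_det_general {K : Type*} [Field K]
    (n : ℕ) (i j : Fin n) (hij : i < j) :
    pderiv s(i, j) (pderiv s(i, j)
        ((Matrix.of fun a b : Fin n =>
          (X s(a, b) : MvPolynomial (Sym2 (Fin n)) K)).det))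
      + 2 * pderiv s(i, i) (pderiv s(j, j)
        ((Matrix.of fun a b : Fin n =>
          (X s(a, b) : MvPolynomial (Sym2 (Fin n)) K)).det)) = 0 := by
  rw [← pairOp_apply]
  exact pairOp_det_symm hij.ne

/-- For the determinant of the generic symmetric `n × n` matrix, the operator
`∂²/∂x_{ij}² + 2·∂²/(∂x_{ii}∂x_{jj})` (with `i < j`) annihilates `det X`. -/
theorem diag_permanent_annihilates_det {K : Type*} [Field K] [CharZero K]
    (n : ℕ) (i j : Fin n) (hij : i < j) :
    pderiv s(i, j) (pderiv s(i, j)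
        ((Matrix.of fun a b : Fin n =>
          (X s(a, b) : MvPolynomial (Sym2 (Fin n)) K)).det))
      + 2 * pderiv s(i, i) (pderiv s(j, j)
        ((Matrix.of fun a b : Fin n =>
          (X s(a, b) : MvPolynomial (Sym2 (Fin n)) K)).det)) = 0 :=
  diag_permanent_annihilates_det_general n i j hij
end

section
/- Let X be a symmetric n×n matrix of variables over a field of characteristic 0 and let i, j, k be distinct indices. Then the operator ∂²/(∂x_{ii}∂x_{jk}) + ∂²/(∂x_{ij}∂x_{ik}) annihilates det(X). -/
open MvPolynomial Finset

section Aux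

variable {R : Type*} [CommRing R] {τ : Type*} [DecidableEq τ]

omit [DecidableEq τ] in
lemma pderiv_finset_prod {ι : Type*} [DecidableEq ι] (v : τ) (s : Finset ι)
    (f : ι → MvPolynomial τ R) :
    pderiv v (∏ a ∈ s, f a) = ∑ a ∈ s, pderiv v (f a) * ∏ b ∈ s.erase a, f b := by
  induction s using Finset.induction_on with
  | empty => simp
  | @insert a s ha ih =>
    rw [Finset.prod_insert ha, pderiv_mul, ih, Finset.sum_insert ha,
      Finset.erase_insert ha, Finset.mul_sum]
    congr 1
    refine Finset.sum_congr rfl fun b hb => ?_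
    rw [Finset.erase_insert_of_ne (ne_of_mem_of_not_mem hb ha).symm,
      Finset.prod_insert (fun h => ha (Finset.mem_of_mem_erase h))]
    ring

omit [DecidableEq τ] in
lemma pderiv_det (v : τ) {n : ℕ} (M : Matrix (Fin n) (Fin n) (MvPolynomial τ R)) :
    pderiv v M.det = ∑ r, (M.updateRow r fun b => pderiv v (M r b)).det := by
  simp only [Matrix.det_apply, map_sum]
  rw [Finset.sum_comm]
  refine Finset.sum_congr rfl fun σ _ => ?_
  rw [Units.smul_def, map_zsmul, pderiv_finset_prod, Finset.smul_sum]
  rw [← Equiv.sum_comp σ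
    (fun r => Equiv.Perm.sign σ • ∏ a, (M.updateRow r fun b => pderiv v (M r b)) (σ a) a)]
  refine Finset.sum_congr rfl fun c _ => ?_
  rw [Units.smul_def]
  congr 1
  rw [← Finset.mul_prod_erase Finset.univ _ (Finset.mem_univ c),
    Matrix.updateRow_self]
  congr 1
  refine Finset.prod_congr rfl fun a ha => ?_
  exact (congrFun (Matrix.updateRow_ne (fun h => (Finset.mem_erase.mp ha).1 (σ.injective h))) a).symm

omit [DecidableEq τ] in
lemma det_updateRow_updateRow_swap {n : ℕ} (M : Matrix (Fin n) (Fin n) R)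
    {a b : Fin n} (hab : a ≠ b) (u v : Fin n → R) :
    ((M.updateRow a u).updateRow b v).det = -((M.updateRow a v).updateRow b u).det := by
  have key : (M.updateRow a u).updateRow b v
      = ((M.updateRow a v).updateRow b u).submatrix (Equiv.swap a b) id := by
    ext r c
    rcases eq_or_ne r a with rfl | hra
    · simp [Matrix.updateRow_ne hab]
    rcases eq_or_ne r b with rfl | hrb
    · simp [Matrix.updateRow_ne hab]
    · simp [Matrix.updateRow_ne hra, Matrix.updateRow_ne hrb,
        Equiv.swap_apply_of_ne_of_ne hra hrb]
  rw [key, Matrix.det_permute, Equiv.Perm.sign_swap hab]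
  simp

omit [DecidableEq τ] in
omit [CommRing R] in
lemma updateRow_comm' {n : ℕ} (M : Matrix (Fin n) (Fin n) R)
    {a b : Fin n} (hab : a ≠ b) (u v : Fin n → R) :
    (M.updateRow a u).updateRow b v = (M.updateRow b v).updateRow a u := by
  ext r c
  rcases eq_or_ne r a with rfl | hra
  · simp [Matrix.updateRow_ne hab]
  rcases eq_or_ne r b with rfl | hrb
  · simp [Matrix.updateRow_ne hab.symm]
  · simp [Matrix.updateRow_ne hra, Matrix.updateRow_ne hrb]

end Aux

section Sym

variable {K : Type*} [CommRing K] {n : ℕ}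

/-- The generic symmetric matrix. -/
noncomputable def Mgen (K : Type*) [CommRing K] (n : ℕ) :
    Matrix (Fin n) (Fin n) (MvPolynomial (Sym2 (Fin n)) K) :=
  Matrix.of fun a b : Fin n => (X s(a, b) : MvPolynomial (Sym2 (Fin n)) K)

/-- The standard basis row. -/
noncomputable def erow (K : Type*) [CommRing K] (n : ℕ) (x : Fin n) :
    Fin n → MvPolynomial (Sym2 (Fin n)) K :=
  fun b => if b = x then 1 else 0

lemma det_updateRow_pderiv_zero (N : Matrix (Fin n) (Fin n) (MvPolynomial (Sym2 (Fin n)) K))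
    (v : Sym2 (Fin n)) (r : Fin n) (h : ∀ b, pderiv v (N r b) = 0) :
    (N.updateRow r fun b => pderiv v (N r b)).det = 0 := by
  refine Matrix.det_eq_zero_of_row_eq_zero r fun c => ?_
  rw [Matrix.updateRow_self]
  exact h c

lemma pderiv_erow (v : Sym2 (Fin n)) (x : Fin n) (b : Fin n) :
    pderiv v (erow K n x b) = 0 := by
  unfold erow
  split <;> simp


/-- first derivative of det of generic matrix, off-diagonal variable -/
lemma L1 {p q : Fin n} (hpq : p ≠ q) :
    pderiv s(p, q) (Mgen K n).det
      = ((Mgen K n).updateRow p (erow K n q)).det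
        + ((Mgen K n).updateRow q (erow K n p)).det := by
  have hrow1 : (fun b => pderiv s(p, q) (Mgen K n p b)) = erow K n q := by
    funext b; simp [Mgen, erow, Pi.single_apply, Sym2.eq_iff, hpq]
  have hrow2 : (fun b => pderiv s(p, q) (Mgen K n q b)) = erow K n p := by
    funext b; simp [Mgen, erow, Pi.single_apply, Sym2.eq_iff, hpq, hpq.symm]
  have hz : ∀ r ∈ Finset.univ (α := Fin n), r ∉ ({p, q} : Finset (Fin n)) →
      ((Mgen K n).updateRow r fun b => pderiv s(p, q) (Mgen K n r b)).det = 0 := by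
    intro r _ hr
    simp only [Finset.mem_insert, Finset.mem_singleton, not_or] at hr
    refine det_updateRow_pderiv_zero _ _ r fun b => ?_
    simp [Mgen, Sym2.eq_iff, hr.1, hr.2]
  rw [pderiv_det, ← Finset.sum_subset (Finset.subset_univ {p, q}) hz,
    Finset.sum_pair hpq, hrow1, hrow2]

/-- derivative wrt a diagonal variable `s(i,i)` of a once-updated generic matrix -/
lemma L2 {m i : Fin n} (hmi : m ≠ i) (c : Fin n → MvPolynomial (Sym2 (Fin n)) K)
    (hc : ∀ b, pderiv s(i, i) (c b) = 0) :
    pderiv s(i, i) ((Mgen K n).updateRow m c).det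
      = (((Mgen K n).updateRow m c).updateRow i (erow K n i)).det := by
  have hrow : (fun b => pderiv s(i, i) ((Mgen K n).updateRow m c i b)) = erow K n i := by
    funext b
    rw [Matrix.updateRow_ne hmi.symm]
    simp [Mgen, erow, Pi.single_apply, Sym2.eq_iff]
  rw [pderiv_det, Finset.sum_eq_single i, hrow]
  · intro r _ hri
    refine det_updateRow_pderiv_zero _ _ r fun b => ?_
    rcases eq_or_ne r m with rfl | hrm
    · rw [Matrix.updateRow_self]; exact hc b
    · rw [Matrix.updateRow_ne hrm]
      simp [Mgen, Sym2.eq_iff, hri]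
  · intro h; exact absurd (Finset.mem_univ i) h

/-- derivative wrt `s(p,q)` of generic matrix updated at row `p` -/
lemma L3 {p q : Fin n} (hpq : p ≠ q) (c : Fin n → MvPolynomial (Sym2 (Fin n)) K)
    (hc : ∀ b, pderiv s(p, q) (c b) = 0) :
    pderiv s(p, q) ((Mgen K n).updateRow p c).det
      = (((Mgen K n).updateRow p c).updateRow q (erow K n p)).det := by
  have hrow : (fun b => pderiv s(p, q) ((Mgen K n).updateRow p c q b)) = erow K n p := by
    funext b
    rw [Matrix.updateRow_ne hpq.symm]
    simp [Mgen, erow, Pi.single_apply, Sym2.eq_iff, hpq, hpq.symm]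
  rw [pderiv_det, Finset.sum_eq_single q, hrow]
  · intro r _ hrq
    refine det_updateRow_pderiv_zero _ _ r fun b => ?_
    rcases eq_or_ne r p with rfl | hrp
    · rw [Matrix.updateRow_self]; exact hc b
    · rw [Matrix.updateRow_ne hrp]
      simp [Mgen, Sym2.eq_iff, hrp, hrq]
  · intro h; exact absurd (Finset.mem_univ q) h

/-- derivative wrt `s(p,q)` of generic matrix updated at a row `m ∉ {p,q}` -/
lemma L4 {p q m : Fin n} (hpq : p ≠ q) (hmp : m ≠ p) (hmq : m ≠ q)
    (c : Fin n → MvPolynomial (Sym2 (Fin n)) K)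
    (hc : ∀ b, pderiv s(p, q) (c b) = 0) :
    pderiv s(p, q) ((Mgen K n).updateRow m c).det
      = (((Mgen K n).updateRow m c).updateRow p (erow K n q)).det
        + (((Mgen K n).updateRow m c).updateRow q (erow K n p)).det := by
  have hrow1 : (fun b => pderiv s(p, q) ((Mgen K n).updateRow m c p b)) = erow K n q := by
    funext b
    rw [Matrix.updateRow_ne hmp.symm]
    simp [Mgen, erow, Pi.single_apply, Sym2.eq_iff, hpq]
  have hrow2 : (fun b => pderiv s(p, q) ((Mgen K n).updateRow m c q b)) = erow K n p := by
    funext b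
    rw [Matrix.updateRow_ne hmq.symm]
    simp [Mgen, erow, Pi.single_apply, Sym2.eq_iff, hpq, hpq.symm]
  have hz : ∀ r ∈ Finset.univ (α := Fin n), r ∉ ({p, q} : Finset (Fin n)) →
      (((Mgen K n).updateRow m c).updateRow r
        fun b => pderiv s(p, q) ((Mgen K n).updateRow m c r b)).det = 0 := by
    intro r _ hr
    simp only [Finset.mem_insert, Finset.mem_singleton, not_or] at hr
    refine det_updateRow_pderiv_zero _ _ r fun b => ?_
    rcases eq_or_ne r m with rfl | hrm
    · rw [Matrix.updateRow_self]; exact hc b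
    · rw [Matrix.updateRow_ne hrm]
      simp [Mgen, Sym2.eq_iff, hr.1, hr.2]
  rw [pderiv_det, ← Finset.sum_subset (Finset.subset_univ {p, q}) hz,
    Finset.sum_pair hpq, hrow1, hrow2]

end Sym

/-- For the determinant of the generic symmetric `n × n` matrix and distinct indices
`i, j, k`, the `2×2` permanent with one diagonal element, i.e. the operator
`∂²/(∂x_{ii}∂x_{jk}) + ∂²/(∂x_{ik}∂x_{ij})`, annihilates `det X`. -/
theorem permanent_one_diag_annihilates_det {K : Type*} [Field K] [CharZero K]
    (n : ℕ) (i j k : Fin n) (hij : i ≠ j) (hik : i ≠ k) (hjk : j ≠ k) :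
    pderiv s(i, i) (pderiv s(j, k)
        ((Matrix.of fun a b : Fin n =>
          (X s(a, b) : MvPolynomial (Sym2 (Fin n)) K)).det))
      + pderiv s(i, k) (pderiv s(i, j)
        ((Matrix.of fun a b : Fin n =>
          (X s(a, b) : MvPolynomial (Sym2 (Fin n)) K)).det)) = 0 := by
  show pderiv s(i, i) (pderiv s(j, k) (Mgen K n).det)
      + pderiv s(i, k) (pderiv s(i, j) (Mgen K n).det) = 0
  rw [L1 hjk, L1 hij, map_add, map_add,
    L2 hij.symm _ (fun b => pderiv_erow _ _ _),
    L2 hik.symm _ (fun b => pderiv_erow _ _ _),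
    L3 hik _ (fun b => pderiv_erow _ _ _),
    L4 hik hij.symm hjk _ (fun b => pderiv_erow _ _ _)]
  have hzero : (((Mgen K n).updateRow j (erow K n i)).updateRow k (erow K n i)).det = 0 := by
    refine Matrix.det_zero_of_row_eq hjk ?_
    rw [Matrix.updateRow_ne hjk, Matrix.updateRow_self, Matrix.updateRow_self]
  have h14 := det_updateRow_updateRow_swap (Mgen K n) (show j ≠ i from hij.symm)
    (erow K n k) (erow K n i)
  have hcomm := updateRow_comm' (Mgen K n) hik (erow K n j) (erow K n i)
  have h23 := det_updateRow_updateRow_swap (Mgen K n) (show k ≠ i from hik.symm)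
    (erow K n j) (erow K n i)
  rw [hcomm, h14, h23, hzero]
  ring
end

section
/- Let X be a symmetric n×n matrix of variables over a field of characteristic 0, n ≥ 4, and let i₁ < i₂ < i₃ < i₄ be four indices. Then the hafnian operator ∂²/(∂x_{i₁i₂}∂x_{i₃i₄}) + ∂²/(∂x_{i₁i₃}∂x_{i₂i₄}) + ∂²/(∂x_{i₁i₄}∂x_{i₂i₃}) annihilates det(X). -/
/-!
The variable `x_{pq}` (`p ≠ q`) occurs in `det X` exactly at the positions `(p, q)` and `(q, p)`,
so `∂/∂x_{pq}` turns `det X` into the sum of the two determinants obtained by replacing row `p`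
by `e_q` or row `q` by `e_p`. The hafnian operator therefore produces twelve determinants,
one for each choice of two "source" rows `a, c` among `i₁, …, i₄` and a bijection sending them
to the other two indices `b, d`: row `a` is replaced by `e_b` and row `c` by `e_d`. The two
terms with the same source rows differ by exchanging those two rows, so they cancel in pairs.
-/

open MvPolynomial Finset

namespace Derivation

variable {R A M : Type*} [CommSemiring R] [CommSemiring A] [AddCommMonoid M] [Algebra R A]
  [Module A M] [Module R M] (D : Derivation R A M)

theorem leibniz_finset_prod {ι : Type*} [DecidableEq ι] (s : Finset ι) (f : ι → A) :
    D (∏ i ∈ s, f i) = ∑ i ∈ s, (∏ j ∈ s.erase i, f j) • D (f i) := by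
  induction s using Finset.induction_on with
  | empty => simp
  | insert a s ha ih =>
    rw [prod_insert ha, leibniz, ih, sum_insert ha, erase_insert ha, smul_sum, add_comm]
    congr 1
    refine sum_congr rfl fun i hi => ?_
    rw [erase_insert_of_ne (ne_of_mem_of_not_mem hi ha).symm,
      prod_insert fun h => ha (mem_of_mem_erase h), mul_smul]

end Derivation

theorem Derivation.map_det {R A : Type*} [CommSemiring R] [CommRing A] [Algebra R A]
    {n : Type*} [Fintype n] [DecidableEq n] (D : Derivation R A A) (M : Matrix n n A) :
    D M.det = ∑ r, (M.updateRow r fun j => D (M r j)).det := by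
  simp only [Matrix.det_apply, map_sum, Units.smul_def, map_zsmul, D.leibniz_finset_prod,
    smul_eq_mul, smul_sum]
  conv_rhs => rw [sum_comm]
  refine sum_congr rfl fun σ _ => Fintype.sum_equiv σ _ _ fun i => ?_
  rw [← mul_prod_erase univ _ (mem_univ i), Matrix.updateRow_self, mul_comm]
  congr 2
  refine prod_congr rfl fun j hj => ?_
  rw [Matrix.updateRow_ne (σ.injective.ne (ne_of_mem_erase hj))]

namespace Matrix

variable {n R : Type*} [Fintype n] [DecidableEq n] [CommRing R]

theorem det_updateRow_updateRow_swap (A : Matrix n n R) {i j : n} (hij : i ≠ j) (u v : n → R) :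
    ((A.updateRow i u).updateRow j v).det = -((A.updateRow i v).updateRow j u).det := by
  have : (A.updateRow i v).updateRow j u =
      ((A.updateRow i u).updateRow j v).submatrix (Equiv.swap i j) id := by
    ext k l
    rcases eq_or_ne k i with rfl | hki
    · simp [hij]
    rcases eq_or_ne k j with rfl | hkj
    · simp [hij]
    simp [Equiv.swap_apply_of_ne_of_ne hki hkj, hki, hkj]
  rw [this, det_permute, Equiv.Perm.sign_swap hij]
  simp

theorem det_updateRow_updateRow_swap' (A : Matrix n n R) {i j : n} (hij : i ≠ j) (u v : n → R) :
    ((A.updateRow i u).updateRow j v).det = -((A.updateRow j u).updateRow i v).det := by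
  rw [det_updateRow_updateRow_swap A hij, updateRow_comm _ hij]

end Matrix

noncomputable def symmetricGenericMatrix (ι R : Type*) [CommSemiring R] :
    Matrix ι ι (MvPolynomial (Sym2 ι) R) :=
  Matrix.of fun a b => X s(a, b)

section SymmetricGeneric

variable {ι R : Type*} [DecidableEq ι] [CommSemiring R]

theorem pderiv_X_mk_left {p q : ι} (hpq : p ≠ q) (j : ι) :
    pderiv s(p, q) (X s(p, j) : MvPolynomial (Sym2 ι) R) =
      (Pi.single q 1 : ι → MvPolynomial (Sym2 ι) R) j := by
  simp [pderiv_X, Pi.single_apply, hpq]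

theorem pderiv_X_mk_right {p q : ι} (hpq : p ≠ q) (j : ι) :
    pderiv s(p, q) (X s(q, j) : MvPolynomial (Sym2 ι) R) =
      (Pi.single p 1 : ι → MvPolynomial (Sym2 ι) R) j := by
  rw [Sym2.eq_swap, pderiv_X_mk_left hpq.symm]

theorem pderiv_X_mk_of_ne {p q r : ι} (hrp : r ≠ p) (hrq : r ≠ q) (j : ι) :
    pderiv s(p, q) (X s(r, j) : MvPolynomial (Sym2 ι) R) = 0 := by
  simp [pderiv_X, hrp, hrq]

end SymmetricGeneric

section

variable {ι R : Type*} [Fintype ι] [DecidableEq ι] [CommRing R]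

local notation "𝕏" => symmetricGenericMatrix ι R

theorem pderiv_det_of_pderiv_eq_pderiv_X {p q : ι} (hpq : p ≠ q)
    (N : Matrix ι ι (MvPolynomial (Sym2 ι) R))
    (hN : ∀ r j, pderiv s(p, q) (N r j) = pderiv s(p, q) (X s(r, j))) :
    pderiv s(p, q) N.det =
      (N.updateRow p (Pi.single q 1)).det + (N.updateRow q (Pi.single p 1)).det := by
  rw [Derivation.map_det, ← sum_subset (subset_univ {p, q}), sum_pair hpq]
  · simp only [hN, pderiv_X_mk_left hpq, pderiv_X_mk_right hpq]
  · intro r _ hr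
    simp only [mem_insert, mem_singleton, not_or] at hr
    refine Matrix.det_eq_zero_of_row_eq_zero r fun j => ?_
    rw [Matrix.updateRow_self, hN, pderiv_X_mk_of_ne hr.1 hr.2]

theorem pderiv_pderiv_det_symmetricGenericMatrix {a b c d : ι} (hab : a ≠ b) (hcd : c ≠ d)
    (hac : a ≠ c) (had : a ≠ d) (hbc : b ≠ c) (hbd : b ≠ d) :
    pderiv s(a, b) (pderiv s(c, d) (𝕏).det) =
      (((𝕏).updateRow c (Pi.single d 1)).updateRow a (Pi.single b 1)).det
      + (((𝕏).updateRow c (Pi.single d 1)).updateRow b (Pi.single a 1)).det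
      + (((𝕏).updateRow d (Pi.single c 1)).updateRow a (Pi.single b 1)).det
      + (((𝕏).updateRow d (Pi.single c 1)).updateRow b (Pi.single a 1)).det := by
  have pderiv_updateRow : ∀ {k l : ι}, k ≠ a → k ≠ b → ∀ r j,
      pderiv s(a, b) ((𝕏).updateRow k (Pi.single l 1) r j) =
        pderiv s(a, b) (X s(r, j)) := by
    intro k l hka hkb r j
    rcases eq_or_ne r k with rfl | hrk
    · rw [Matrix.updateRow_self, pderiv_X_mk_of_ne hka hkb]
      rcases eq_or_ne j l with rfl | hjl <;> simp [*]
    · rw [Matrix.updateRow_ne hrk]; rfl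
  rw [pderiv_det_of_pderiv_eq_pderiv_X hcd 𝕏 fun _ _ => rfl, map_add,
    pderiv_det_of_pderiv_eq_pderiv_X hab _ (pderiv_updateRow hac.symm hbc.symm),
    pderiv_det_of_pderiv_eq_pderiv_X hab _ (pderiv_updateRow had.symm hbd.symm), ← add_assoc]

end

theorem hafnian_annihilates_det_general {K : Type*} [Field K]
    (n : ℕ) (i₁ i₂ i₃ i₄ : Fin n)
    (h12 : i₁ < i₂) (h23 : i₂ < i₃) (h34 : i₃ < i₄) :
    pderiv s(i₁, i₂) (pderiv s(i₃, i₄)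
        ((Matrix.of fun a b : Fin n =>
          (X s(a, b) : MvPolynomial (Sym2 (Fin n)) K)).det))
      + pderiv s(i₁, i₃) (pderiv s(i₂, i₄)
        ((Matrix.of fun a b : Fin n =>
          (X s(a, b) : MvPolynomial (Sym2 (Fin n)) K)).det))
      + pderiv s(i₁, i₄) (pderiv s(i₂, i₃)
        ((Matrix.of fun a b : Fin n =>
          (X s(a, b) : MvPolynomial (Sym2 (Fin n)) K)).det)) = 0 := by
  have h13 := h12.trans h23
  have h14 := h13.trans h34
  have h24 := h23.trans h34
  rw [← symmetricGenericMatrix,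
    pderiv_pderiv_det_symmetricGenericMatrix h12.ne h34.ne h13.ne h14.ne h23.ne h24.ne,
    pderiv_pderiv_det_symmetricGenericMatrix h13.ne h24.ne h12.ne h14.ne h23.ne.symm h34.ne,
    pderiv_pderiv_det_symmetricGenericMatrix h14.ne h23.ne h12.ne h13.ne h24.ne.symm h34.ne.symm]
  set M := symmetricGenericMatrix (Fin n) K
  linear_combination Matrix.det_updateRow_updateRow_swap M h13.ne' _ _
    + Matrix.det_updateRow_updateRow_swap M h14.ne' _ _
    + Matrix.det_updateRow_updateRow_swap M h12.ne' _ _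
    + Matrix.det_updateRow_updateRow_swap' M h24.ne' _ _
    + Matrix.det_updateRow_updateRow_swap' M h23.ne' _ _
    + Matrix.det_updateRow_updateRow_swap' M h34.ne' _ _

/-- For the determinant of the generic symmetric `n × n` matrix (`n ≥ 4`) and indices
`i₁ < i₂ < i₃ < i₄`, the `4×4` hafnian operator
`∂²/(∂x_{i₁i₂}∂x_{i₃i₄}) + ∂²/(∂x_{i₁i₃}∂x_{i₂i₄}) + ∂²/(∂x_{i₁i₄}∂x_{i₂i₃})`
annihilates `det X`. -/
theorem hafnian_annihilates_det {K : Type*} [Field K] [CharZero K]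
    (n : ℕ) (hn : 4 ≤ n) (i₁ i₂ i₃ i₄ : Fin n)
    (h12 : i₁ < i₂) (h23 : i₂ < i₃) (h34 : i₃ < i₄) :
    pderiv s(i₁, i₂) (pderiv s(i₃, i₄)
        ((Matrix.of fun a b : Fin n =>
          (X s(a, b) : MvPolynomial (Sym2 (Fin n)) K)).det))
      + pderiv s(i₁, i₃) (pderiv s(i₂, i₄)
        ((Matrix.of fun a b : Fin n =>
          (X s(a, b) : MvPolynomial (Sym2 (Fin n)) K)).det))
      + pderiv s(i₁, i₄) (pderiv s(i₂, i₃)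
        ((Matrix.of fun a b : Fin n =>
          (X s(a, b) : MvPolynomial (Sym2 (Fin n)) K)).det)) = 0 :=
  hafnian_annihilates_det_general n i₁ i₂ i₃ i₄ h12 h23 h34
end

section
/- Let X be a symmetric n×n matrix of variables over a field of characteristic 0. For any i < j, the operator ∂²/∂x_{ij}² − 2·∂²/(∂x_{ii}∂x_{jj}) annihilates perm(X), the permanent of X. -/
open MvPolynomial

/-- The permanent of the generic symmetric `n × n` matrix, a polynomial in the
variables `x_{ij} = x_{ji}` indexed by `Sym2 (Fin n)`. -/
noncomputable def symPerm (K : Type*) [Field K] (n : ℕ) : MvPolynomial (Sym2 (Fin n)) K :=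
  ∑ σ : Equiv.Perm (Fin n), ∏ i : Fin n, X s(i, σ i)

/-!
Split each term of the permanent as `x_{i,σ i} x_{j,σ j} · r_σ`, where `r_σ` involves no variable
with both indices in `{i, j}`, so the operator only sees the quadratic factor. There
`∂²/∂x_{ij}²` gives `2` exactly when `σ` swaps `i` and `j`, and `∂²/(∂x_{ii}∂x_{jj})` gives `1`
exactly when `σ` fixes both. Right multiplication by the transposition `(i j)` matches these two
sets of permutations and leaves `r_σ` unchanged, so the two contributions cancel.
-/

theorem Derivation.apply_apply_mul_of_apply_eq_zero {R A : Type*} [CommSemiring R]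
    [CommSemiring A] [Algebra R A] (D₁ D₂ : Derivation R A A) (p : A) {r : A}
    (h₁ : D₁ r = 0) (h₂ : D₂ r = 0) : D₁ (D₂ (p * r)) = D₁ (D₂ p) * r := by
  simp [Derivation.leibniz, h₁, h₂, mul_comm]

namespace MvPolynomial

variable {R σ : Type*} [CommSemiring R]

theorem pderiv_prod_X_eq_zero {ι : Type*} (v : σ) (f : ι → σ) (s : Finset ι)
    (h : ∀ k ∈ s, f k ≠ v) : pderiv v (∏ k ∈ s, X (f k) : MvPolynomial σ R) = 0 := by
  refine Finset.prod_induction _ (fun p => pderiv v p = 0) (fun a b ha hb => ?_) pderiv_one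
    fun k hk => pderiv_X_of_ne (h k hk)
  simp [ha, hb]

theorem pderiv_pderiv_X_mul_X [DecidableEq σ] (w w' u v : σ) :
    pderiv w (pderiv w' (X u * X v : MvPolynomial σ R)) =
      (if u = w' ∧ v = w then 1 else 0) + (if u = w ∧ v = w' then 1 else 0) := by
  simp only [pderiv_mul, pderiv_X, Pi.single_apply, map_add, apply_ite (pderiv w), pderiv_one,
    map_zero, ite_self, zero_mul, mul_zero, zero_add, add_zero, ite_zero_mul_ite_zero, mul_one]

variable {α : Type*} [DecidableEq α] {i j : α}

theorem pderiv_sym2_offDiag_sq (a b : α) :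
    pderiv s(i, j) (pderiv s(i, j) (X s(i, a) * X s(j, b) : MvPolynomial (Sym2 α) R)) =
      if a = j ∧ b = i then 2 else 0 := by
  rw [pderiv_pderiv_X_mul_X]
  simp only [Sym2.congr_right, Sym2.eq_swap (a := i), Sym2.congr_left]
  split_ifs <;> simp [one_add_one_eq_two]

theorem pderiv_sym2_diag_diag (hij : i ≠ j) (a b : α) :
    pderiv s(i, i) (pderiv s(j, j) (X s(i, a) * X s(j, b) : MvPolynomial (Sym2 α) R)) =
      if a = i ∧ b = j then 1 else 0 := by
  rw [pderiv_pderiv_X_mul_X]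
  simp [hij, hij.symm]

end MvPolynomial

open Equiv

section SymPermRest

variable {R ι : Type*} [CommSemiring R] [Fintype ι] [DecidableEq ι]

noncomputable def symPermRest (i j : ι) (σ : Perm ι) : MvPolynomial (Sym2 ι) R :=
  ∏ k ∈ {i, j}ᶜ, X s(k, σ k)

theorem prod_X_eq_mul_symPermRest {i j : ι} (hij : i ≠ j) (σ : Perm ι) :
    ∏ k, (X s(k, σ k) : MvPolynomial (Sym2 ι) R) =
      X s(i, σ i) * X s(j, σ j) * symPermRest i j σ := by
  rw [symPermRest, ← Finset.prod_mul_prod_compl {i, j}, Finset.prod_pair hij]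

theorem symPermRest_mul_swap (i j : ι) (σ : Perm ι) :
    (symPermRest i j (σ * swap i j) : MvPolynomial (Sym2 ι) R) = symPermRest i j σ := by
  refine Finset.prod_congr rfl fun k hk => ?_
  simp only [Finset.mem_compl, Finset.mem_insert, Finset.mem_singleton, not_or] at hk
  rw [Perm.mul_apply, swap_apply_of_ne_of_ne hk.1 hk.2]

theorem pderiv_symPermRest {i j a b : ι} (ha : a ∈ ({i, j} : Finset ι))
    (hb : b ∈ ({i, j} : Finset ι)) (σ : Perm ι) :
    pderiv s(a, b) (symPermRest i j σ : MvPolynomial (Sym2 ι) R) = 0 := by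
  refine MvPolynomial.pderiv_prod_X_eq_zero _ _ _ fun k hk hkab => Finset.mem_compl.1 hk ?_
  rcases Sym2.eq_iff.1 hkab with ⟨rfl, -⟩ | ⟨rfl, -⟩
  exacts [ha, hb]

end SymPermRest

theorem Equiv.Perm.sum_ite_swap_eq {ι M : Type*} [Fintype ι] [DecidableEq ι] [AddCommMonoid M]
    (i j : ι) (f : Perm ι → M) :
    ∑ σ : Perm ι, (if σ i = j ∧ σ j = i then f σ else 0) =
      ∑ σ : Perm ι, (if σ i = i ∧ σ j = j then f (σ * swap i j) else 0) := by
  refine (Fintype.sum_equiv (Equiv.mulRight (swap i j)) _ _ fun σ => ?_).symm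
  simp [Perm.mul_apply, and_comm]

theorem diag_minor_annihilates_perm_general {K : Type*} [Field K]
    (n : ℕ) (i j : Fin n) (hij : i < j) :
    pderiv s(i, j) (pderiv s(i, j) (symPerm K n))
      - 2 * pderiv s(i, i) (pderiv s(j, j) (symPerm K n)) = 0 := by
  have hi : i ∈ ({i, j} : Finset (Fin n)) := by simp
  have hj : j ∈ ({i, j} : Finset (Fin n)) := by simp
  simp only [symPerm, prod_X_eq_mul_symPermRest hij.ne, map_sum,
    Derivation.apply_apply_mul_of_apply_eq_zero _ _ _ (pderiv_symPermRest hi hj _)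
      (pderiv_symPermRest hi hj _),
    Derivation.apply_apply_mul_of_apply_eq_zero _ _ _ (pderiv_symPermRest hi hi _)
      (pderiv_symPermRest hj hj _),
    pderiv_sym2_offDiag_sq, pderiv_sym2_diag_diag hij.ne, ite_mul, zero_mul, one_mul]
  rw [Perm.sum_ite_swap_eq]
  simp only [symPermRest_mul_swap, Finset.mul_sum, mul_ite, mul_zero, sub_self]

/-- For the permanent of the generic symmetric `n × n` matrix, the operator
`∂²/∂x_{ij}² − 2·∂²/(∂x_{ii}∂x_{jj})` (with `i < j`) annihilates `perm X`. -/
theorem diag_minor_annihilates_perm {K : Type*} [Field K] [CharZero K]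
    (n : ℕ) (i j : Fin n) (hij : i < j) :
    pderiv s(i, j) (pderiv s(i, j) (symPerm K n))
      - 2 * pderiv s(i, i) (pderiv s(j, j) (symPerm K n)) = 0 :=
  diag_minor_annihilates_perm_general n i j hij
end

section
/- Let X be a symmetric n×n matrix of variables over a field of characteristic 0 and let i, j, k be distinct indices. The 2×2 minor operator with one diagonal element, ∂²/(∂x_{ij}∂x_{ik}) − ∂²/(∂x_{ii}∂x_{jk}), annihilates perm(X). -/
/-!
Each permutation `σ` contributes the monomial `∏ t, x_{t, σ t}`. It survives `∂²/∂x_{ij}∂x_{ik}`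
exactly when `σ i = k, σ j = i` or `σ i = j, σ k = i`, and `∂²/∂x_{ii}∂x_{jk}` exactly when
`σ i = i` and `σ j = k` or `σ k = j`; all nonzero coefficients are `1`. Right multiplication by
the transposition `(i j)`, resp. `(i k)`, matches these families bijectively, and since swapping
`a, b` only trades the factors `x_{a, σ a} x_{b, σ b}` for `x_{a, σ b} x_{b, σ a}`, matched
permutations leave the same monomial after differentiation.
-/

open MvPolynomial

theorem MvPolynomial.pderiv_pderiv_monomial_of_ne {σ R : Type*} [CommSemiring R] {a b : σ}
    (hab : a ≠ b) (d : σ →₀ ℕ) (r : R) :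
    pderiv a (pderiv b (monomial d r)) =
      monomial (d - Finsupp.single b 1 - Finsupp.single a 1) (r * d b * d a) := by
  rw [pderiv_monomial, pderiv_monomial, Finsupp.tsub_apply, Finsupp.single_eq_of_ne hab,
    Nat.sub_zero]

namespace Equiv.Perm

open Finsupp

section

variable {α : Type*} [Fintype α]

noncomputable def edgeCount (σ : Perm α) : Sym2 α →₀ ℕ :=
  ∑ t, single s(t, σ t) 1

theorem prod_X_eq_monomial_edgeCount (R : Type*) [CommSemiring R] (σ : Perm α) :
    ∏ t, (X s(t, σ t) : MvPolynomial (Sym2 α) R) = monomial σ.edgeCount 1 :=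
  (monomial_sum_one _ _).symm

end

variable {α : Type*} [Fintype α] [DecidableEq α] (σ : Perm α) {a b : α}

theorem edgeCount_apply (e : Sym2 α) :
    σ.edgeCount e = ∑ t, if s(t, σ t) = e then 1 else 0 := by
  simp only [edgeCount, finsetSum_apply, single_apply]

theorem edgeCount_apply_of_ne (hab : a ≠ b) :
    σ.edgeCount s(a, b) = (if σ a = b then 1 else 0) + (if σ b = a then 1 else 0) := by
  rw [edgeCount_apply, Fintype.sum_eq_add a b hab]
  · simp [hab, hab.symm]
  · rintro t ⟨hta, htb⟩
    simp [hta, htb]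

theorem edgeCount_apply_diag (a : α) :
    σ.edgeCount s(a, a) = if σ a = a then 1 else 0 := by
  rw [edgeCount_apply, Fintype.sum_eq_single a]
  · simp
  · intro t hta
    simp [hta]

theorem edgeCount_tsub_tsub (hab : a ≠ b) :
    σ.edgeCount - single s(a, σ a) 1 - single s(b, σ b) 1 =
      ∑ t ∈ {a, b}ᶜ, single s(t, σ t) 1 := by
  rw [edgeCount, ← Finset.sum_add_sum_compl {a, b}, Finset.sum_pair hab, add_assoc,
    add_tsub_cancel_left, add_tsub_cancel_left]

theorem edgeCount_mul_swap_tsub_tsub (hab : a ≠ b) :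
    (σ * swap a b).edgeCount - single s(a, σ b) 1 - single s(b, σ a) 1 =
      σ.edgeCount - single s(a, σ a) 1 - single s(b, σ b) 1 := by
  have h := (σ * swap a b).edgeCount_tsub_tsub hab
  simp only [mul_apply, swap_apply_left, swap_apply_right] at h
  rw [h, edgeCount_tsub_tsub σ hab]
  refine Finset.sum_congr rfl fun t ht => ?_
  simp only [Finset.mem_compl, Finset.mem_insert, Finset.mem_singleton, not_or] at ht
  rw [swap_apply_of_ne_of_ne ht.1 ht.2]

theorem sum_ite_edgeCount_tsub_swap {M : Type*} [AddCommMonoid M] (F : (Sym2 α →₀ ℕ) → M)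
    (hab : a ≠ b) (c : α) :
    ∑ σ : Perm α, (if σ a = c ∧ σ b = a then
        F (σ.edgeCount - single s(a, c) 1 - single s(b, a) 1) else 0) =
      ∑ σ : Perm α, (if σ a = a ∧ σ b = c then
        F (σ.edgeCount - single s(a, a) 1 - single s(b, c) 1) else 0) := by
  refine (Fintype.sum_equiv (Equiv.mulRight (swap a b)) _ _ fun σ => ?_).symm
  simp only [Equiv.coe_mulRight, mul_apply, swap_apply_left, swap_apply_right]
  by_cases h : σ a = a ∧ σ b = c
  · have key := σ.edgeCount_mul_swap_tsub_tsub hab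
    rw [h.1, h.2] at key
    rw [if_pos h, if_pos ⟨h.2, h.1⟩, key]
  · rw [if_neg h, if_neg fun h' => h ⟨h'.2, h'.1⟩]

variable {R : Type*} [CommSemiring R] {i j k : α}

theorem pderiv_pderiv_monomial_edgeCount_of_ne (hij : i ≠ j) (hik : i ≠ k) (hjk : j ≠ k) :
    pderiv s(i, j) (pderiv s(i, k) (monomial σ.edgeCount (1 : R))) =
      (if σ i = k ∧ σ j = i then
        monomial (σ.edgeCount - single s(i, k) 1 - single s(j, i) 1) 1 else 0) +
      (if σ i = j ∧ σ k = i then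
        monomial (σ.edgeCount - single s(i, j) 1 - single s(k, i) 1) 1 else 0) := by
  have hne : s(i, j) ≠ s(i, k) := fun h => hjk (Sym2.congr_right.1 h)
  have hcount : σ.edgeCount s(i, k) * σ.edgeCount s(i, j) =
      (if σ i = k ∧ σ j = i then 1 else 0) + (if σ i = j ∧ σ k = i then 1 else 0) := by
    have := σ.injective.ne hjk
    rw [edgeCount_apply_of_ne σ hik, edgeCount_apply_of_ne σ hij]
    split_ifs <;> grind
  rw [pderiv_pderiv_monomial_of_ne hne, one_mul, ← Nat.cast_mul, hcount, Sym2.eq_swap (a := j),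
    Sym2.eq_swap (a := k), tsub_right_comm (a := σ.edgeCount) (b := single s(i, j) 1)]
  simp only [Nat.cast_add, Nat.cast_ite, Nat.cast_one, Nat.cast_zero, map_add,
    apply_ite (monomial _), map_zero]

theorem pderiv_pderiv_monomial_edgeCount_diag (hij : i ≠ j) (hik : i ≠ k) (hjk : j ≠ k) :
    pderiv s(i, i) (pderiv s(j, k) (monomial σ.edgeCount (1 : R))) =
      (if σ i = i ∧ σ j = k then
        monomial (σ.edgeCount - single s(i, i) 1 - single s(j, k) 1) 1 else 0) +
      (if σ i = i ∧ σ k = j then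
        monomial (σ.edgeCount - single s(i, i) 1 - single s(k, j) 1) 1 else 0) := by
  have hne : s(i, i) ≠ s(j, k) := by simp [hij, hik]
  have hcount : σ.edgeCount s(j, k) * σ.edgeCount s(i, i) =
      (if σ i = i ∧ σ j = k then 1 else 0) + (if σ i = i ∧ σ k = j then 1 else 0) := by
    rw [edgeCount_apply_of_ne σ hjk, edgeCount_apply_diag]
    split_ifs <;> grind
  rw [pderiv_pderiv_monomial_of_ne hne, one_mul, ← Nat.cast_mul, hcount, Sym2.eq_swap (a := k),
    tsub_right_comm (a := σ.edgeCount) (b := single s(j, k) 1)]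
  simp only [Nat.cast_add, Nat.cast_ite, Nat.cast_one, Nat.cast_zero, map_add,
    apply_ite (monomial _), map_zero]

end Equiv.Perm

theorem minor_one_diag_annihilates_perm_general {K : Type*} [Field K]
    (n : ℕ) (i j k : Fin n) (hij : i ≠ j) (hik : i ≠ k) (hjk : j ≠ k) :
    pderiv s(i, j) (pderiv s(i, k) (symPerm K n))
      - pderiv s(i, i) (pderiv s(j, k) (symPerm K n)) = 0 := by
  simp only [symPerm, map_sum, Equiv.Perm.prod_X_eq_monomial_edgeCount,
    Equiv.Perm.pderiv_pderiv_monomial_edgeCount_of_ne _ hij hik hjk,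
    Equiv.Perm.pderiv_pderiv_monomial_edgeCount_diag _ hij hik hjk, Finset.sum_add_distrib,
    Equiv.Perm.sum_ite_edgeCount_tsub_swap (fun d => monomial d (1 : K)) hij,
    Equiv.Perm.sum_ite_edgeCount_tsub_swap (fun d => monomial d (1 : K)) hik, sub_self]

/-- For the permanent of the generic symmetric `n × n` matrix and distinct indices
`i, j, k`, the `2×2` minor with one diagonal element, i.e. the operator
`∂²/(∂x_{ij}∂x_{ik}) − ∂²/(∂x_{ii}∂x_{jk})`, annihilates `perm X`. -/
theorem minor_one_diag_annihilates_perm {K : Type*} [Field K] [CharZero K]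
    (n : ℕ) (i j k : Fin n) (hij : i ≠ j) (hik : i ≠ k) (hjk : j ≠ k) :
    pderiv s(i, j) (pderiv s(i, k) (symPerm K n))
      - pderiv s(i, i) (pderiv s(j, k) (symPerm K n)) = 0 :=
  minor_one_diag_annihilates_perm_general n i j k hij hik hjk
end
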